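/- Let S ⊂ ℤ_{≥0}^r be a good semigroup with weight function w and let ℓ ∈ ℤ_{≥0}^r with w(ℓ) ≥ 2. Then there exists a 'good direction' i ∈ {1,…,r} such that w(ℓ − eᵢ) < w(ℓ) < w(ℓ + eᵢ), and moreover for every cube (ℓ, J⁺, J⁻) with i ∉ J⁺ ∪ J⁻ admitting ℓ as an M-vertex, every vertex ℓ' of that cube satisfies w(ℓ' − eᵢ) < w(ℓ'). -/

import Mathlib

open Finset

/-- Lattice points (we work in `ℤ^r`; nonnegativity is imposed via hypotheses). -/
abbrev Pt (r : ℕ) := Fin r → ℤ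

/-- The `i`-th standard basis vector. -/
def E {r : ℕ} (i : Fin r) : Pt r := Pi.single i 1

/-- `e_K = ∑_{i ∈ K} e_i`. -/
def eK {r : ℕ} (K : Finset (Fin r)) : Pt r := ∑ i ∈ K, E i

/-- `Δ̄ᵢ(ℓ) = {s ∈ S : sᵢ = ℓᵢ, sⱼ ≥ ℓⱼ ∀ j ≠ i}`. -/
def DeltaBarI {r : ℕ} (S : Set (Pt r)) (ℓ : Pt r) (i : Fin r) : Set (Pt r) :=
  {s | s ∈ S ∧ s i = ℓ i ∧ ∀ j, j ≠ i → ℓ j ≤ s j}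

/-- `Δᵢ(ℓ) = {s ∈ S : sᵢ = ℓᵢ, sⱼ > ℓⱼ ∀ j ≠ i}`. -/
def DeltaI {r : ℕ} (S : Set (Pt r)) (ℓ : Pt r) (i : Fin r) : Set (Pt r) :=
  {s | s ∈ S ∧ s i = ℓ i ∧ ∀ j, j ≠ i → ℓ j < s j}

/-- `Δ(ℓ) = ∪ᵢ Δᵢ(ℓ)`. -/
def Delta {r : ℕ} (S : Set (Pt r)) (ℓ : Pt r) : Set (Pt r) := ⋃ i, DeltaI S ℓ i

/-- A good (local) semigroup `S ⊂ ℤ_{≥0}^r` with conductor `c`. -/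
structure GoodSemigroup (r : ℕ) where
  S : Set (Pt r)
  c : Pt r
  nonneg : ∀ s ∈ S, (0 : Pt r) ≤ s
  zero_mem : (0 : Pt r) ∈ S
  add_mem : ∀ s ∈ S, ∀ t ∈ S, s + t ∈ S
  coord_zero : ∀ s ∈ S, ∀ i, s i = 0 → s = 0
  min_mem : ∀ s ∈ S, ∀ t ∈ S, s ⊓ t ∈ S
  prop3 : ∀ s ∈ S, ∀ t ∈ S, ∀ i, s i = t i →
    ∃ u ∈ S, s ⊓ t ≤ u ∧ s i < u i ∧ ∀ j, j ≠ i → s j ≠ t j → u j = (s ⊓ t) j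
  conductor_nonneg : (0 : Pt r) ≤ c
  conductor_mem : ∀ ℓ : Pt r, c ≤ ℓ → ℓ ∈ S
  conductor_min : ∀ c' : Pt r, 0 ≤ c' → (∀ ℓ, c' ≤ ℓ → ℓ ∈ S) → c ≤ c'

/-- `h` is the (combinatorial) Hilbert function of the good semigroup `G`. -/
def IsHilbert {r : ℕ} (G : GoodSemigroup r) (h : Pt r → ℤ) : Prop :=
  h 0 = 0 ∧ ∀ ℓ : Pt r, 0 ≤ ℓ → ∀ i : Fin r,
    (h (ℓ + E i) = h ℓ + 1 ↔ (DeltaBarI G.S ℓ i).Nonempty) ∧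
    (h (ℓ + E i) = h ℓ ↔ ¬ (DeltaBarI G.S ℓ i).Nonempty)

/-- `w` is the weight function of the good semigroup `G` (i.e. `w(ℓ) = 2h(ℓ) − |ℓ|`),
characterized by `w(0) = 0` and the step property. -/
def IsWeight {r : ℕ} (G : GoodSemigroup r) (w : Pt r → ℤ) : Prop :=
  w 0 = 0 ∧ ∀ ℓ : Pt r, 0 ≤ ℓ → ∀ i : Fin r,
    (w (ℓ + E i) = w ℓ + 1 ↔ (DeltaBarI G.S ℓ i).Nonempty) ∧
    (w (ℓ + E i) = w ℓ - 1 ↔ ¬ (DeltaBarI G.S ℓ i).Nonempty)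

/-- Generalized local minimum point of the weight function. -/
def GLM {r : ℕ} (w : Pt r → ℤ) (p : Pt r) : Prop :=
  0 ≤ p ∧ ∀ i : Fin r, 1 ≤ p i → w p < w (p - E i)

/-- Local minimum point of the weight function. -/
def LocMin {r : ℕ} (w : Pt r → ℤ) (p : Pt r) : Prop :=
  GLM w p ∧ ∀ i : Fin r, w p < w (p + E i)

/-!
Let `D` be the set of directions in which `w` decreases at `ℓ`, and `p = ℓ + e_D`. The heart of
the proof is that some `i ∉ D` with `ℓᵢ ≥ 1` has `w(p − eᵢ) < w(p)`. By stability this increase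
persists at every point below `p − eᵢ` with the same `i`-th coordinate; `ℓ − eᵢ` and `ℓ' − eᵢ` for
every vertex `ℓ'` of a cube as in the statement are such points (the directions of `J⁺` lie in `D`).

If there were no such `i`, then `w` would decrease from `p` in every direction `d` of the support
of `ℓ` (for `d ∈ D` by stability). Walk from `0` to `ℓ`, and from `e_D` to `p` along the same steps in
reverse order: two steps in the same direction `d` whose base points sum to `p − e_d` cannot
both increase `w`, since the sum of the two witnesses in `Δ̄_d` would witness an increase into `p`.
Hence `w(ℓ) + w(p) ≤ w(e_D)`. As `w(p) ≥ w(ℓ) − |D|` and `w(e_D) ≤ 2 − |D|` (by the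
coordinate-zero axiom every step after the first one decreases), `w(ℓ) ≤ 1`.
-/

variable {r : ℕ}

lemma E_apply (i j : Fin r) : E i j = if j = i then 1 else 0 := by
  simp [E, Pi.single_apply]

lemma eK_apply (K : Finset (Fin r)) (j : Fin r) : eK K j = if j ∈ K then 1 else 0 := by
  simp [eK, Finset.sum_apply, E_apply]

lemma E_nonneg (i : Fin r) : (0 : Pt r) ≤ E i := fun j => by
  rw [E_apply]; split_ifs <;> simp

lemma eK_nonneg (K : Finset (Fin r)) : (0 : Pt r) ≤ eK K := fun j => by
  rw [eK_apply]; split_ifs <;> simp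

lemma eK_mono {K L : Finset (Fin r)} (h : K ⊆ L) : eK K ≤ eK L := fun j => by
  by_cases hK : j ∈ K
  · simp [eK_apply, hK, h hK]
  · simp only [eK_apply, hK, if_false]; split_ifs <;> simp

lemma E_le_eK {K : Finset (Fin r)} {d : Fin r} (h : d ∈ K) : E d ≤ eK K := by
  simpa [eK] using eK_mono (singleton_subset_iff.mpr h)

lemma sub_E_nonneg {x : Pt r} (hx : 0 ≤ x) {d : Fin r} (hd : 1 ≤ x d) : 0 ≤ x - E d :=
  fun j => by
    have := hx j
    simp only [Pi.zero_apply, Pi.sub_apply, E_apply] at *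
    split_ifs with h
    · subst h; omega
    · omega

lemma eK_insert {K : Finset (Fin r)} {j : Fin r} (hj : j ∉ K) :
    eK (insert j K) = eK K + E j := by
  rw [eK, Finset.sum_insert hj, add_comm]; rfl

lemma nonneg_induction {P : Pt r → Prop} (zero : P 0)
    (step : ∀ a, 0 ≤ a → ∀ d, P a → P (a + E d)) : ∀ a, 0 ≤ a → P a := by
  suffices ∀ n : ℕ, ∀ a : Pt r, 0 ≤ a → ∑ i, a i = n → P a from
    fun a ha => this _ a ha (Int.toNat_of_nonneg (Finset.sum_nonneg fun i _ => ha i)).symm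
  intro n
  induction n with
  | zero =>
    intro a ha hsum
    have : a = 0 := funext fun j =>
      (Finset.sum_eq_zero_iff_of_nonneg fun i _ => ha i).mp (by simpa using hsum) j (mem_univ j)
    exact this ▸ zero
  | succ n ih =>
    intro a ha hsum
    obtain ⟨d, hd⟩ : ∃ d, 1 ≤ a d := by
      by_contra! h
      have : ∑ i, a i = 0 := Finset.sum_eq_zero fun i _ => le_antisymm (by linarith [h i]) (ha i)
      omega
    have hsub := sub_E_nonneg ha hd
    have key := step _ hsub d (ih _ hsub (by
      simp only [Pi.sub_apply, Finset.sum_sub_distrib, hsum, E_apply, Finset.sum_ite_eq',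
        mem_univ, if_true]
      push_cast; ring))
    rwa [sub_add_cancel] at key

namespace DeltaBarI

variable {S : Set (Pt r)} {a b : Pt r} {d : Fin r}

lemma nonempty_of_le (hab : a ≤ b) (hd : a d = b d) (h : (DeltaBarI S b d).Nonempty) :
    (DeltaBarI S a d).Nonempty := by
  obtain ⟨s, hsS, hsd, hsge⟩ := h
  exact ⟨s, hsS, hsd.trans hd.symm, fun j hj => (hab j).trans (hsge j hj)⟩

lemma add_mem {G : GoodSemigroup r} {s t : Pt r} (hs : s ∈ DeltaBarI G.S a d)
    (ht : t ∈ DeltaBarI G.S b d) : s + t ∈ DeltaBarI G.S (a + b) d :=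
  ⟨G.add_mem s hs.1 t ht.1, by simp [hs.2.1, ht.2.1],
    fun j hj => add_le_add (hs.2.2 j hj) (ht.2.2 j hj)⟩

lemma not_nonempty_of_apply_eq_zero {G : GoodSemigroup r} {k : Fin r} (had : a d = 0)
    (hk : 1 ≤ a k) (hkd : k ≠ d) : ¬ (DeltaBarI G.S a d).Nonempty := by
  rintro ⟨s, hsS, hsd, hsge⟩
  obtain rfl := G.coord_zero s hsS d (hsd.trans had)
  have := hsge k hkd
  simp only [Pi.zero_apply] at this
  omega

end DeltaBarI

def downDirs (w : Pt r → ℤ) (ℓ : Pt r) : Finset (Fin r) := {j | w (ℓ + E j) < w ℓ}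

@[simp]
lemma mem_downDirs {w : Pt r → ℤ} {ℓ : Pt r} {j : Fin r} :
    j ∈ downDirs w ℓ ↔ w (ℓ + E j) < w ℓ := by
  simp [downDirs]

namespace IsWeight

variable {G : GoodSemigroup r} {w : Pt r → ℤ} (hw : IsWeight G w)
include hw

lemma add_E_eq {x : Pt r} (hx : 0 ≤ x) (d : Fin r) :
    w (x + E d) = w x + 1 ∨ w (x + E d) = w x - 1 := by
  by_cases h : (DeltaBarI G.S x d).Nonempty
  · exact .inl ((hw.2 x hx d).1.mpr h)
  · exact .inr ((hw.2 x hx d).2.mpr h)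

lemma lt_add_E_iff {x : Pt r} (hx : 0 ≤ x) (d : Fin r) :
    w x < w (x + E d) ↔ (DeltaBarI G.S x d).Nonempty := by
  rw [← (hw.2 x hx d).1]
  rcases hw.add_E_eq hx d with h | h <;> omega

lemma lt_add_E_of_le {x y : Pt r} (hx : 0 ≤ x) (hxy : x ≤ y) {d : Fin r} (hd : x d = y d)
    (hy : w y < w (y + E d)) : w x < w (x + E d) :=
  (hw.lt_add_E_iff hx d).mpr <|
    DeltaBarI.nonempty_of_le hxy hd ((hw.lt_add_E_iff (hx.trans hxy) d).mp hy)

lemma lt_add_add_E {x y : Pt r} (hx : 0 ≤ x) (hy : 0 ≤ y) {d : Fin r}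
    (hxd : w x < w (x + E d)) (hyd : w y < w (y + E d)) : w (x + y) < w (x + y + E d) := by
  obtain ⟨s, hs⟩ := (hw.lt_add_E_iff hx d).mp hxd
  obtain ⟨t, ht⟩ := (hw.lt_add_E_iff hy d).mp hyd
  exact (hw.lt_add_E_iff (add_nonneg hx hy) d).mpr ⟨s + t, DeltaBarI.add_mem hs ht⟩

lemma sub_card_le_add_eK {x : Pt r} (hx : 0 ≤ x) (K : Finset (Fin r)) :
    w x - #K ≤ w (x + eK K) := by
  induction K using Finset.induction_on with
  | empty => simp [eK]
  | insert j K hj ih =>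
    rw [eK_insert hj, card_insert_of_notMem hj, ← add_assoc]
    rcases hw.add_E_eq (add_nonneg hx (eK_nonneg K)) j with h | h <;> push_cast <;> omega

lemma eK_le (K : Finset (Fin r)) : w (eK K) ≤ 2 - #K := by
  induction K using Finset.induction_on with
  | empty => simp [eK, hw.1]
  | insert j K hj ih =>
    rw [eK_insert hj, card_insert_of_notMem hj]
    obtain rfl | ⟨k, hk⟩ := K.eq_empty_or_nonempty
    · rcases hw.add_E_eq le_rfl j with h | h <;> simp_all [eK, hw.1]
    · have hdown : ¬ w (eK K) < w (eK K + E j) := by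
        rw [hw.lt_add_E_iff (eK_nonneg K)]
        refine DeltaBarI.not_nonempty_of_apply_eq_zero (k := k) ?_ ?_ ?_
        · simp [eK_apply, hj]
        · simp [eK_apply, hk]
        · rintro rfl; exact hj hk
      rcases hw.add_E_eq (eK_nonneg K) j with h | h <;> push_cast <;> omega

lemma sub_E_lt_of_le {x y : Pt r} {d : Fin r} (hx : 0 ≤ x - E d) (hxy : x ≤ y) (hd : x d = y d)
    (hy : w (y - E d) < w y) : w (x - E d) < w x := by
  have := hw.lt_add_E_of_le (d := d) hx (sub_le_sub_right hxy _) (by simp [hd])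
    (by rwa [sub_add_cancel])
  rwa [sub_add_cancel] at this

lemma add_add_le_of_forall_lt_sub_E {a b : Pt r} (ha : 0 ≤ a) (hb : 0 ≤ b)
    (hblock : ∀ d, 1 ≤ a d → w (a + b) < w (a + b - E d)) : w a + w (a + b) ≤ w b := by
  suffices ∀ a, 0 ≤ a → ∀ b, 0 ≤ b →
      (∀ d, 1 ≤ a d → w (a + b) < w (a + b - E d)) → w a + w (a + b) ≤ w b from
    this a ha b hb hblock
  refine nonneg_induction ?_ ?_
  · intro b _ _
    simp [hw.1]
  · intro a ha d ih b hb hblock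
    have hshift : a + E d + b = a + (b + E d) := by abel
    have ih' := ih (b + E d) (add_nonneg hb (E_nonneg d)) fun d' hd' => by
      rw [← hshift]
      exact hblock d' (hd'.trans (le_add_of_nonneg_right (E_nonneg d d')))
    have hnot_both : ¬ (w a < w (a + E d) ∧ w b < w (b + E d)) := by
      rintro ⟨hua, hub⟩
      have hup := hw.lt_add_add_E ha hb hua hub
      have hdown := hblock d (by simpa [E_apply] using ha d)
      rw [show a + E d + b - E d = a + b by abel, show a + E d + b = a + b + E d by abel] at hdown
      omega
    rw [hshift]
    rcases hw.add_E_eq ha d with h | h <;> rcases hw.add_E_eq hb d with h' | h' <;> omega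

lemma lt_add_E_iff_notMem_downDirs {ℓ : Pt r} (hl : 0 ≤ ℓ) (i : Fin r) :
    w ℓ < w (ℓ + E i) ↔ i ∉ downDirs w ℓ := by
  rw [mem_downDirs, not_lt]
  rcases hw.add_E_eq hl i with h | h <;> omega

lemma exists_sub_E_lt_add_eK_downDirs {ℓ : Pt r} (hl : 0 ≤ ℓ) (h2 : 2 ≤ w ℓ) :
    ∃ i, i ∉ downDirs w ℓ ∧ 1 ≤ ℓ i ∧
      w (ℓ + eK (downDirs w ℓ) - E i) < w (ℓ + eK (downDirs w ℓ)) := by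
  set D := downDirs w ℓ
  by_contra! hnone
  have hblock : ∀ d, 1 ≤ ℓ d → w (ℓ + eK D) < w (ℓ + eK D - E d) := by
    intro d hd
    have hsub : 0 ≤ ℓ + eK D - E d :=
      sub_E_nonneg (add_nonneg hl (eK_nonneg D)) (by simpa using add_le_add hd (eK_nonneg D d))
    have hnot_up : ¬ w (ℓ + eK D - E d) < w (ℓ + eK D) := by
      by_cases hdD : d ∈ D
      · intro hup
        have hle : ℓ ≤ ℓ + eK D - E d := by
          rw [add_sub_assoc]
          exact le_add_of_nonneg_right (sub_nonneg.mpr (E_le_eK hdD))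
        have := hw.lt_add_E_of_le (d := d) hl hle (by simp [eK_apply, E_apply, hdD])
          (by rwa [sub_add_cancel])
        exact (hw.lt_add_E_iff_notMem_downDirs hl d).mp this hdD
      · exact (hnone d hdD hd).not_gt
    have := hw.add_E_eq hsub d
    rw [sub_add_cancel] at this
    omega
  have hpair := hw.add_add_le_of_forall_lt_sub_E hl (eK_nonneg D) hblock
  have hlower := hw.sub_card_le_add_eK hl D
  have hupper := hw.eK_le D
  omega

end IsWeight

/-- existence of a good direction at any lattice point of weight `≥ 2`. -/
theorem stmt19 {r : ℕ} (G : GoodSemigroup r) (w : Pt r → ℤ) (hw : IsWeight G w)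
    (ℓ : Pt r) (hl : 0 ≤ ℓ) (h2 : 2 ≤ w ℓ) :
    ∃ i : Fin r, w (ℓ - E i) < w ℓ ∧ w ℓ < w (ℓ + E i) ∧
      ∀ Jp Jm : Finset (Fin r), Disjoint Jp Jm → i ∉ Jp → i ∉ Jm → eK Jm ≤ ℓ →
        (∀ j ∈ Jp, w (ℓ + E j) < w ℓ) → (∀ j ∈ Jm, w (ℓ - E j) < w ℓ) →
        ∀ Kp ⊆ Jp, ∀ Km ⊆ Jm,
          w ((ℓ + eK Kp - eK Km) - E i) < w (ℓ + eK Kp - eK Km) := by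
  obtain ⟨i, hiD, hi, hcap⟩ := hw.exists_sub_E_lt_add_eK_downDirs hl h2
  set D := downDirs w ℓ
  have hDi : eK D i = 0 := by simp [eK_apply, hiD]
  refine ⟨i, hw.sub_E_lt_of_le (sub_E_nonneg hl hi) (le_add_of_nonneg_right (eK_nonneg D))
    (by simp [hDi]) hcap, (hw.lt_add_E_iff_notMem_downDirs hl i).mpr hiD, ?_⟩
  intro Jp Jm _ hiJp hiJm hJm hJp _ Kp hKp Km hKm
  have hKpD : Kp ⊆ D := fun j hj => mem_downDirs.mpr (hJp j (hKp hj))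
  have hiKp : i ∉ Kp := fun h => hiJp (hKp h)
  have hiKm : i ∉ Km := fun h => hiJm (hKm h)
  have hcoord : (ℓ + eK Kp - eK Km) i = ℓ i := by simp [eK_apply, hiKp, hiKm]
  have hnonneg : 0 ≤ ℓ + eK Kp - eK Km := by
    rw [add_sub_right_comm]
    exact add_nonneg (sub_nonneg.mpr ((eK_mono hKm).trans hJm)) (eK_nonneg Kp)
  refine hw.sub_E_lt_of_le (sub_E_nonneg hnonneg (hcoord ▸ hi)) ?_ (by simp [hcoord, hDi]) hcap
  exact (sub_le_self _ (eK_nonneg Km)).trans (add_le_add_right (eK_mono hKpD) ℓ)
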